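/- Sharpness of linear programming: for a standard-form LP whose saddle-point set Z* is nonempty, for every R > 0 there exists a constant α > 0 such that for every z ∈ Z with ‖z‖₂ ≤ R and every 0 < r ≤ R, α·dist₂(z, Z*) ≤ ρ_r(z), where dist₂(z, Z*) = inf_{z* ∈ Z*} ‖z − z*‖₂. -/

import Mathlib

open Matrix Filter

/-- Euclidean norm of a vector in `ℝ^d`. -/
noncomputable def enormV {d : ℕ} (x : Fin d → ℝ) : ℝ := Real.sqrt (x ⬝ᵥ x)

/-- Spectral norm (ℓ₂ operator norm) of a matrix. -/
noncomputable def specNorm {m n : ℕ} (A : Matrix (Fin m) (Fin n) ℝ) : ℝ :=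
  sSup {t | ∃ x : Fin n → ℝ, x ⬝ᵥ x ≤ 1 ∧ t = enormV (A.mulVec x)}

/-- Componentwise positive part (projection onto the nonnegative orthant). -/
def projPos {d : ℕ} (x : Fin d → ℝ) : Fin d → ℝ := fun i => max (x i) 0

/-- One PDHG iteration with equal primal/dual step size `s`. -/
noncomputable def pdhgT {m n : ℕ} (A : Matrix (Fin m) (Fin n) ℝ) (b : Fin m → ℝ)
    (c : Fin n → ℝ) (s : ℝ) (z : (Fin n → ℝ) × (Fin m → ℝ)) : (Fin n → ℝ) × (Fin m → ℝ) :=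
  let x' := projPos (z.1 + s • Aᵀ.mulVec z.2 - s • c)
  (x', z.2 - s • A.mulVec ((2 : ℝ) • x' - z.1) + s • b)

/-- The Lagrangian `L(x,y) = cᵀx - yᵀAx + bᵀy`. -/
noncomputable def lagr {m n : ℕ} (A : Matrix (Fin m) (Fin n) ℝ) (b : Fin m → ℝ)
    (c : Fin n → ℝ) (x : Fin n → ℝ) (y : Fin m → ℝ) : ℝ :=
  c ⬝ᵥ x - y ⬝ᵥ A.mulVec x + b ⬝ᵥ y

/-- Membership in `Z = ℝ₊ⁿ × ℝᵐ`. -/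
def inZ {m n : ℕ} (z : (Fin n → ℝ) × (Fin m → ℝ)) : Prop := ∀ i, 0 ≤ z.1 i

/-- Saddle point of `L` over `Z`. -/
def isSaddle {m n : ℕ} (A : Matrix (Fin m) (Fin n) ℝ) (b : Fin m → ℝ) (c : Fin n → ℝ)
    (z : (Fin n → ℝ) × (Fin m → ℝ)) : Prop :=
  inZ z ∧ ∀ w : (Fin n → ℝ) × (Fin m → ℝ), inZ w →
    lagr A b c z.1 w.2 ≤ lagr A b c z.1 z.2 ∧ lagr A b c z.1 z.2 ≤ lagr A b c w.1 z.2

/-- The quadratic form `‖z‖²_{P_s}` induced by `P_s = [[(1/s)I, Aᵀ],[A,(1/s)I]]`. -/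
noncomputable def PsSq {m n : ℕ} (A : Matrix (Fin m) (Fin n) ℝ) (s : ℝ)
    (z : (Fin n → ℝ) × (Fin m → ℝ)) : ℝ :=
  (1 / s) * (z.1 ⬝ᵥ z.1 + z.2 ⬝ᵥ z.2) + 2 * (A.mulVec z.1 ⬝ᵥ z.2)

/-- The `P_s` norm. -/
noncomputable def PsNorm {m n : ℕ} (A : Matrix (Fin m) (Fin n) ℝ) (s : ℝ)
    (z : (Fin n → ℝ) × (Fin m → ℝ)) : ℝ := Real.sqrt (PsSq A s z)

/-- Euclidean norm on the primal-dual pair space. -/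
noncomputable def enormP {m n : ℕ} (z : (Fin n → ℝ) × (Fin m → ℝ)) : ℝ :=
  Real.sqrt (z.1 ⬝ᵥ z.1 + z.2 ⬝ᵥ z.2)

/-- Normalized duality gap `ρ_r(z)`. -/
noncomputable def rho {m n : ℕ} (A : Matrix (Fin m) (Fin n) ℝ) (b : Fin m → ℝ)
    (c : Fin n → ℝ) (r : ℝ) (z : (Fin n → ℝ) × (Fin m → ℝ)) : ℝ :=
  (1 / r) * sSup {g | ∃ w : (Fin n → ℝ) × (Fin m → ℝ), inZ w ∧ enormP (w - z) ≤ r ∧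
    g = lagr A b c z.1 w.2 - lagr A b c w.1 z.2}

/-- Euclidean distance to the saddle-point set `Z*`. -/
noncomputable def dist2 {m n : ℕ} (A : Matrix (Fin m) (Fin n) ℝ) (b : Fin m → ℝ)
    (c : Fin n → ℝ) (z : (Fin n → ℝ) × (Fin m → ℝ)) : ℝ :=
  sInf {d | ∃ w, isSaddle A b c w ∧ d = enormP (z - w)}

/-- `P_s`-distance to the saddle-point set `Z*`. -/
noncomputable def distPs {m n : ℕ} (A : Matrix (Fin m) (Fin n) ℝ) (b : Fin m → ℝ)
    (c : Fin n → ℝ) (s : ℝ) (z : (Fin n → ℝ) × (Fin m → ℝ)) : ℝ :=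
  sInf {d | ∃ w, isSaddle A b c w ∧ d = PsNorm A s (z - w)}

/-- `v` is the infimal displacement vector of `T`: the minimum-`P_s`-norm element
of the closure of `range (T - I)`. -/
def isIDV {m n : ℕ} (A : Matrix (Fin m) (Fin n) ℝ) (s : ℝ)
    (T : (Fin n → ℝ) × (Fin m → ℝ) → (Fin n → ℝ) × (Fin m → ℝ))
    (v : (Fin n → ℝ) × (Fin m → ℝ)) : Prop :=
  v ∈ closure {w | ∃ z, w = T z - z} ∧
  ∀ w ∈ closure {w | ∃ z, w = T z - z}, PsNorm A s v ≤ PsNorm A s w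


open Finset

variable {E : Type*} [NormedAddCommGroup E] [InnerProductSpace ℝ E]
variable {ι : Type*} [Fintype ι]

/-- Carathéodory-type reduction: a nonnegative combination can be rewritten with
linearly independent support contained in the original support. -/
theorem carath_red (a : ι → E) (lam : ι → ℝ) (hlam : ∀ i, 0 ≤ lam i) :
    ∃ mu : ι → ℝ, (∀ i, 0 ≤ mu i) ∧ (∀ i, lam i = 0 → mu i = 0) ∧
      (∑ i, mu i • a i = ∑ i, lam i • a i) ∧
      LinearIndependent ℝ (fun s : {i // mu i ≠ 0} => a s) := by
  classical
  obtain ⟨N, hN⟩ : ∃ N, (univ.filter fun i => lam i ≠ 0).card ≤ N := ⟨_, le_rfl⟩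
  induction N generalizing lam with
  | zero =>
    refine ⟨lam, hlam, fun i h => h, rfl, ?_⟩
    have h0 : ∀ i, lam i = 0 := by
      intro i
      by_contra h
      have : i ∈ univ.filter fun i => lam i ≠ 0 := by simp [h]
      have := card_pos.mpr ⟨i, this⟩
      omega
    have : IsEmpty {i // lam i ≠ 0} := ⟨fun s => s.2 (h0 s.1)⟩
    exact linearIndependent_empty_type
  | succ N ih =>
    by_cases hind : LinearIndependent ℝ (fun s : {i // lam i ≠ 0} => a s)
    · exact ⟨lam, hlam, fun i h => h, rfl, hind⟩
    · -- get a nontrivial relation on the support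
      rw [Fintype.not_linearIndependent_iff] at hind
      obtain ⟨g, hgsum, s0, hs0⟩ := hind
      -- extend g to ι
      set G : ι → ℝ := fun i => if h : lam i ≠ 0 then g ⟨i, h⟩ else 0 with hG
      have hGsum : ∑ i, G i • a i = 0 := by
        rw [← hgsum]
        rw [← Finset.sum_subset (Finset.filter_subset (fun i => lam i ≠ 0) univ)
          (by intro i _ hi; simp only [mem_filter, mem_univ, true_and] at hi
              simp [hG, not_not.mp (by simpa using hi)])]
        rw [Finset.sum_subtype (p := fun i => lam i ≠ 0) (univ.filter fun i => lam i ≠ 0)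
          (by intro x; simp) (fun i => G i • a i)]
        refine Finset.sum_congr rfl fun s _ => ?_
        simp [hG, s.2]
      -- WLOG some G i > 0
      have hex : (∃ i, 0 < G i) ∨ (∃ i, 0 < -G i) := by
        rcases lt_trichotomy (g s0) 0 with h | h | h
        · right; exact ⟨s0, by simp [hG, s0.2, Subtype.coe_eta]; nlinarith [show g s0 < 0 from h]⟩
        · exact absurd h hs0
        · left; exact ⟨s0, by simp [hG, s0.2, Subtype.coe_eta]; nlinarith⟩
      obtain ⟨H, hHsum, hHpos, hHsupp⟩ :
          ∃ H : ι → ℝ, (∑ i, H i • a i = 0) ∧ (∃ i, 0 < H i) ∧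
            (∀ i, lam i = 0 → H i = 0) := by
        rcases hex with ⟨i, hi⟩ | ⟨i, hi⟩
        · exact ⟨G, hGsum, ⟨i, hi⟩, fun j hj => by simp [hG, hj]⟩
        · refine ⟨-G, by simpa using neg_eq_zero.mpr hGsum, ⟨i, hi⟩, fun j hj => by simp [hG, hj]⟩
      set Pos : Finset ι := univ.filter fun i => 0 < H i with hPos
      have hPosne : Pos.Nonempty := ⟨hHpos.choose, by simp [hPos, hHpos.choose_spec]⟩
      set t : ℝ := Pos.inf' hPosne (fun i => lam i / H i) with ht
      have ht0 : 0 ≤ t := by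
        apply Finset.le_inf'
        intro i hi
        simp only [hPos, mem_filter] at hi
        exact div_nonneg (hlam i) hi.2.le
      set lam' : ι → ℝ := fun i => lam i - t * H i with hlam'
      have hlam'0 : ∀ i, 0 ≤ lam' i := by
        intro i
        by_cases hi : 0 < H i
        · have h1 : t ≤ lam i / H i := Finset.inf'_le _ (by simp [hPos, hi])
          have := (le_div_iff₀ hi).mp h1
          simp only [hlam']; linarith
        · push_neg at hi
          have : t * H i ≤ 0 := mul_nonpos_of_nonneg_of_nonpos ht0 hi
          simp only [hlam']; linarith [hlam i]
      have hsupp' : ∀ i, lam i = 0 → lam' i = 0 := by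
        intro i h; simp [hlam', h, hHsupp i h]
      have hsum' : ∑ i, lam' i • a i = ∑ i, lam i • a i := by
        simp only [hlam', sub_smul, Finset.sum_sub_distrib, mul_smul]
        rw [← Finset.smul_sum, hHsum, smul_zero, sub_zero]
      obtain ⟨i0, hi0mem, hi0⟩ := Finset.exists_mem_eq_inf' hPosne (fun i => lam i / H i)
      have hi0pos : 0 < H i0 := by simpa [hPos] using hi0mem
      have hi0lam : lam i0 ≠ 0 := fun h => by
        have := hHsupp i0 h; rw [this] at hi0pos; exact lt_irrefl 0 hi0pos
      have hi0' : lam' i0 = 0 := by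
        have : t = lam i0 / H i0 := hi0
        simp only [hlam', this]
        field_simp
        ring
      have hcard : (univ.filter fun i => lam' i ≠ 0).card ≤ N := by
        have hss : (univ.filter fun i => lam' i ≠ 0) ⊂ (univ.filter fun i => lam i ≠ 0) := by
          constructor
          · intro i hi
            simp only [mem_filter, mem_univ, true_and] at hi ⊢
            exact fun h => hi (hsupp' i h)
          · intro hsub
            have : i0 ∈ univ.filter fun i => lam' i ≠ 0 := hsub (by simp [hi0lam])
            simp only [mem_filter, mem_univ, true_and] at this
            exact this hi0'
        have := Finset.card_lt_card hss
        omega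
      obtain ⟨mu, h1, h2, h3, h4⟩ := ih lam' hlam'0 hcard
      exact ⟨mu, h1, fun i h => h2 i (hsupp' i h), h3.trans hsum', h4⟩

/-- Uniform mass bound for nonnegative combinations with linearly independent support. -/
theorem mass_bound (a : ι → E) :
    ∃ H : ℝ, 0 < H ∧ ∀ mu : ι → ℝ, (∀ i, 0 ≤ mu i) →
      LinearIndependent ℝ (fun s : {i // mu i ≠ 0} => a s) →
      ∑ i, mu i ≤ H * ‖∑ i, mu i • a i‖ := by
  classical
  set S : Finset ι → Set (ι → ℝ) := fun T =>
    {v | (∀ i, 0 ≤ v i) ∧ (∑ i, v i = 1) ∧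
      LinearIndependent ℝ (fun s : T => a s) ∧ ∀ i ∉ T, v i = 0} with hS
  set K : Set (ι → ℝ) := ⋃ T : Finset ι, S T with hK
  have hScompact : ∀ T, IsCompact (S T) := by
    intro T
    by_cases hind : LinearIndependent ℝ (fun s : T => a s)
    · have hclosed : IsClosed (S T) := by
        have : S T = (⋂ i, {v : ι → ℝ | 0 ≤ v i}) ∩ ({v | ∑ i, v i = 1} ∩
            ⋂ i ∈ ({i | i ∉ T} : Set ι), {v : ι → ℝ | v i = 0}) := by
          ext v; simp only [hS, Set.mem_setOf_eq, Set.mem_inter_iff, Set.mem_iInter, hind]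
          tauto
        rw [this]
        refine (isClosed_iInter fun i => isClosed_le continuous_const (continuous_apply i)).inter
          ((isClosed_eq (by fun_prop) continuous_const).inter
            (isClosed_biInter fun i _ => isClosed_eq (continuous_apply i) continuous_const))
      have hbdd : Bornology.IsBounded (S T) := by
        refine (Metric.isBounded_closedBall (x := (0 : ι → ℝ)) (r := 1)).subset ?_
        intro v hv
        obtain ⟨h0, h1, -, -⟩ := hv
        simp only [Metric.mem_closedBall, dist_zero_right]
        refine (pi_norm_le_iff_of_nonneg zero_le_one).mpr fun i => ?_
        rw [Real.norm_eq_abs, abs_of_nonneg (h0 i)]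
        calc v i ≤ ∑ j, v j := Finset.single_le_sum (fun j _ => h0 j) (mem_univ i)
        _ = 1 := h1
      exact Metric.isCompact_of_isClosed_isBounded hclosed hbdd
    · convert isCompact_empty
      ext v; simp [hS, hind]
  have hKcompact : IsCompact K := isCompact_iUnion hScompact
  -- membership lemma
  have hmem : ∀ mu : ι → ℝ, (∀ i, 0 ≤ mu i) →
      LinearIndependent ℝ (fun s : {i // mu i ≠ 0} => a s) → (∑ i, mu i) ≠ 0 →
      (∑ i, mu i)⁻¹ • mu ∈ K := by
    intro mu h0 hind hs
    set T : Finset ι := univ.filter fun i => mu i ≠ 0 with hT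
    have hTind : LinearIndependent ℝ (fun s : T => a s) := by
      have h2 := hind.comp (Equiv.subtypeEquivRight (q := fun i => mu i ≠ 0)
        (by simp [hT]) : {i // i ∈ T} ≃ {i // mu i ≠ 0})
        (Equiv.injective _)
      exact h2
    have hspos : 0 < ∑ i, mu i := by
      rcases (Finset.sum_nonneg (fun i _ => h0 i)).lt_or_eq with h | h
      · exact h
      · exact absurd h.symm hs
    refine Set.mem_iUnion.mpr ⟨T, ?_⟩
    refine ⟨fun i => mul_nonneg (inv_nonneg.mpr hspos.le) (h0 i), ?_, hTind, ?_⟩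
    · simp only [Pi.smul_apply, smul_eq_mul]
      rw [← Finset.mul_sum]; field_simp
    · intro i hi
      simp only [hT, mem_filter, mem_univ, true_and, not_not] at hi
      simp [hi]
  by_cases hne : K.Nonempty
  · obtain ⟨v0, hv0K, hmin⟩ := hKcompact.exists_isMinOn hne
      (f := fun v => ‖∑ i, v i • a i‖)
      (Continuous.continuousOn ((continuous_finset_sum _ fun i _ =>
        ((continuous_apply i).smul continuous_const)).norm))
    set c : ℝ := ‖∑ i, v0 i • a i‖ with hc
    have hcpos : 0 < c := by
      rcases (norm_nonneg (∑ i, v0 i • a i)).lt_or_eq with h | h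
      · exact h
      · exfalso
        obtain ⟨T, hT⟩ := Set.mem_iUnion.mp hv0K
        obtain ⟨h0, h1, hind, hoff⟩ := hT
        have hzero : ∑ i, v0 i • a i = 0 := by
          rw [← norm_eq_zero, ← hc]; exact h.symm
        have hrestrict : ∑ s : T, v0 s • a (s : ι) = 0 := by
          rw [← hzero]
          rw [← Finset.sum_subtype (p := fun i => i ∈ T) T (fun x => Iff.rfl)
            (fun i => v0 i • a i)]
          exact Finset.sum_subset (Finset.subset_univ T)
            (fun i _ hi => by rw [hoff i hi, zero_smul])
        have hvzero : ∀ s : T, v0 s = 0 := by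
          have := Fintype.linearIndependent_iff.mp hind (fun s => v0 s) hrestrict
          exact this
        have : ∑ i, v0 i = 0 := by
          apply Finset.sum_eq_zero
          intro i _
          by_cases hiT : i ∈ T
          · exact hvzero ⟨i, hiT⟩
          · exact hoff i hiT
        rw [h1] at this; norm_num at this
    refine ⟨1 / c, by positivity, fun mu h0 hind => ?_⟩
    by_cases hs : (∑ i, mu i) = 0
    · have : ∀ i, mu i = 0 := by
        intro i
        have := (Finset.sum_eq_zero_iff_of_nonneg (fun j _ => h0 j)).mp hs i (mem_univ i)
        exact this
      simp only [hs]
      positivity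
    · have hmemK := hmem mu h0 hind hs
      have hspos : 0 < ∑ i, mu i := by
        rcases (Finset.sum_nonneg (fun i _ => h0 i)).lt_or_eq with h | h
        · exact h
        · exact absurd h.symm hs
      have := hmin hmemK
      simp only [Set.mem_setOf_eq] at this
      have hnorm : ‖∑ i, ((∑ j, mu j)⁻¹ • mu) i • a i‖
          = (∑ j, mu j)⁻¹ * ‖∑ i, mu i • a i‖ := by
        rw [show ∑ i, ((∑ j, mu j)⁻¹ • mu) i • a i = (∑ j, mu j)⁻¹ • ∑ i, mu i • a i by
          rw [Finset.smul_sum]; exact Finset.sum_congr rfl fun i _ => by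
            simp [Pi.smul_apply, smul_smul]]
        rw [norm_smul, Real.norm_eq_abs, abs_of_nonneg (inv_nonneg.mpr hspos.le)]
      rw [hnorm] at this
      have : c * (∑ j, mu j) ≤ ‖∑ i, mu i • a i‖ := by
        rw [← hc] at this
        calc c * (∑ j, mu j) ≤ ((∑ j, mu j)⁻¹ * ‖∑ i, mu i • a i‖) * (∑ j, mu j) := by
              exact mul_le_mul_of_nonneg_right this hspos.le
        _ = ‖∑ i, mu i • a i‖ := by field_simp
      rw [div_mul_eq_mul_div, le_div_iff₀ hcpos]
      linarith
  · refine ⟨1, one_pos, fun mu h0 hind => ?_⟩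
    by_cases hs : (∑ i, mu i) = 0
    · rw [hs]; positivity
    · exact absurd (hmem mu h0 hind hs) (by simp [Set.not_nonempty_iff_eq_empty.mp hne])

section FD
open scoped InnerProductSpace
variable [FiniteDimensional ℝ E]

/-- The finitely generated cone on generators `a i` for `i` satisfying `act`. -/
def coneSet (a : ι → E) (act : ι → Prop) : Set E :=
  {v | ∃ lam : ι → ℝ, (∀ i, 0 ≤ lam i) ∧ (∀ i, ¬ act i → lam i = 0) ∧ v = ∑ i, lam i • a i}

theorem coneSet_isClosed (a : ι → E) (act : ι → Prop) : IsClosed (coneSet a act) := by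
  classical
  obtain ⟨H, hH, hmass⟩ := mass_bound a
  apply IsSeqClosed.isClosed
  intro u v hu hlim
  -- reduce each representation
  have hrep : ∀ k, ∃ mu : ι → ℝ, (∀ i, 0 ≤ mu i) ∧ (∀ i, ¬ act i → mu i = 0) ∧
      u k = ∑ i, mu i • a i ∧ ∑ i, mu i ≤ H * ‖u k‖ := by
    intro k
    obtain ⟨lam, h0, hoff, hsum⟩ := hu k
    obtain ⟨mu, m0, msupp, msum, mind⟩ := carath_red a lam h0
    refine ⟨mu, m0, fun i hi => msupp i (hoff i hi), by rw [hsum, ← msum], ?_⟩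
    have := hmass mu m0 mind
    rw [← msum] at hsum
    rw [← hsum] at this
    exact this
  choose mu hmu0 hmuoff hmusum hmumass using hrep
  -- uniform bound
  obtain ⟨M, hM⟩ : ∃ M : ℝ, ∀ k, ‖u k‖ ≤ M := by
    have hbd : Bornology.IsBounded (Set.range u) :=
      Metric.isBounded_range_of_tendsto u hlim
    obtain ⟨M, hM⟩ := hbd.exists_norm_le
    exact ⟨M, fun k => hM _ ⟨k, rfl⟩⟩
  have hMnn : 0 ≤ M := le_trans (norm_nonneg _) (hM 0)
  have hbox : ∀ k, mu k ∈ Set.pi Set.univ (fun _ : ι => Set.Icc (0:ℝ) (H * M)) := by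
    intro k i _
    refine ⟨hmu0 k i, ?_⟩
    calc mu k i ≤ ∑ j, mu k j :=
          Finset.single_le_sum (fun j _ => hmu0 k j) (Finset.mem_univ i)
    _ ≤ H * ‖u k‖ := hmumass k
    _ ≤ H * M := by nlinarith [hM k]
  have hcompact : IsCompact (Set.pi Set.univ (fun _ : ι => Set.Icc (0:ℝ) (H * M))) :=
    isCompact_univ_pi fun _ => isCompact_Icc
  obtain ⟨L, hLmem, φ, hφ, hconv⟩ := hcompact.tendsto_subseq hbox
  refine ⟨L, fun i => (hLmem i (Set.mem_univ i)).1, ?_, ?_⟩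
  · intro i hi
    have h1 : Filter.Tendsto (fun k => mu (φ k) i) Filter.atTop (nhds (L i)) :=
      (continuous_apply i).continuousAt.tendsto.comp hconv
    have h2 : (fun k => mu (φ k) i) = fun _ => 0 := funext fun k => hmuoff (φ k) i hi
    rw [h2] at h1
    exact (tendsto_nhds_unique tendsto_const_nhds h1).symm
  · have hcont : Continuous (fun w : ι → ℝ => ∑ i, w i • a i) :=
      continuous_finset_sum _ fun i _ => (continuous_apply i).smul continuous_const
    have h1 : Filter.Tendsto (fun k => ∑ i, mu (φ k) i • a i) Filter.atTop
        (nhds (∑ i, L i • a i)) := (hcont.continuousAt.tendsto).comp hconv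
    have h2 : Filter.Tendsto (fun k => u (φ k)) Filter.atTop (nhds v) :=
      hlim.comp hφ.tendsto_atTop
    have h3 : (fun k => ∑ i, mu (φ k) i • a i) = fun k => u (φ k) :=
      funext fun k => (hmusum (φ k)).symm
    rw [h3] at h1
    exact tendsto_nhds_unique h2 h1

theorem farkas_cone (a : ι → E) (act : ι → Prop) (v : E)
    (h : ∀ w : E, (∀ i, act i → ⟪a i, w⟫_ℝ ≤ 0) → ⟪v, w⟫_ℝ ≤ 0) :
    v ∈ coneSet a act := by
  classical
  by_contra hv
  set K : ConvexCone ℝ E :=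
    { carrier := coneSet a act
      smul_mem' := by
        rintro r hr x ⟨lam, h0, hoff, rfl⟩
        refine ⟨fun i => r * lam i, fun i => mul_nonneg hr.le (h0 i),
          fun i hi => by simp only []; rw [hoff i hi, mul_zero], ?_⟩
        rw [Finset.smul_sum]
        exact (Finset.sum_congr rfl fun i _ => (mul_smul _ _ _)).symm
      add_mem' := by
        rintro x ⟨lam, h0, hoff, rfl⟩ y ⟨lam', h0', hoff', rfl⟩
        refine ⟨fun i => lam i + lam' i, fun i => add_nonneg (h0 i) (h0' i),
          fun i hi => by simp only []; rw [hoff i hi, hoff' i hi, add_zero], ?_⟩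
        rw [← Finset.sum_add_distrib]
        exact (Finset.sum_congr rfl fun i _ => (add_smul _ _ _)).symm } with hKdef
  have hKne : (K : Set E).Nonempty :=
    ⟨0, ⟨fun _ => 0, fun i => le_refl 0, fun i _ => rfl, by simp⟩⟩
  have hKclosed : IsClosed (K : Set E) := coneSet_isClosed a act
  obtain ⟨y, hy1, hy2'⟩ :=
    ProperCone.hyperplane_separation' (⟨K.toPointedCone
      (ConvexCone.Pointed.of_nonempty_of_isClosed hKne hKclosed), hKclosed⟩ : ProperCone ℝ E)
      (x₀ := v) hv
  have hy2 : ⟪y, v⟫_ℝ < 0 := by rw [real_inner_comm]; exact hy2'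
  have hw : ∀ i, act i → ⟪a i, -y⟫_ℝ ≤ 0 := by
    intro i hi
    have hmem : a i ∈ K := by
      refine ⟨fun j => if j = i then 1 else 0, fun j => by positivity,
        fun j hj => if_neg (by rintro rfl; exact hj hi), ?_⟩
      rw [Finset.sum_eq_single i (fun j _ hj => by simp [hj]) (by simp)]
      simp
    have := hy1 _ hmem
    rw [inner_neg_right]
    linarith
  have := h (-y) hw
  rw [inner_neg_right] at this
  have h3 : 0 ≤ ⟪v, y⟫_ℝ := by linarith
  rw [real_inner_comm] at h3
  linarith

/-- Hoffman-type error bound for a nonempty polyhedron. -/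
theorem hoffman_bound (a : ι → E) (q : ι → ℝ)
    (hP : {u : E | ∀ i, ⟪a i, u⟫_ℝ ≤ q i}.Nonempty) :
    ∃ H : ℝ, 0 < H ∧ ∀ u : E, ∀ B : ℝ, 0 ≤ B → (∀ i, ⟪a i, u⟫_ℝ ≤ q i + B) →
      ∃ p : E, (∀ i, ⟪a i, p⟫_ℝ ≤ q i) ∧ ‖u - p‖ ≤ H * B := by
  classical
  obtain ⟨H, hH, hmass⟩ := mass_bound a
  refine ⟨H, hH, fun u B hB hres => ?_⟩
  set P : Set E := {w | ∀ i, ⟪a i, w⟫_ℝ ≤ q i} with hPdef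
  have hPconvex : Convex ℝ P := by
    intro x hx y hy s t hs ht hst
    intro i
    have := hx i; have := hy i
    calc ⟪a i, s • x + t • y⟫_ℝ = s * ⟪a i, x⟫_ℝ + t * ⟪a i, y⟫_ℝ := by
          rw [inner_add_right, real_inner_smul_right, real_inner_smul_right]
    _ ≤ s * q i + t * q i := by
          exact add_le_add (mul_le_mul_of_nonneg_left (hx i) hs)
            (mul_le_mul_of_nonneg_left (hy i) ht)
    _ = q i := by rw [← add_mul, hst, one_mul]
  have hPclosed : IsClosed P := by
    have : P = ⋂ i, {w : E | ⟪a i, w⟫_ℝ ≤ q i} := by ext w; simp [hPdef]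
    rw [this]
    exact isClosed_iInter fun i =>
      isClosed_le (Continuous.inner continuous_const continuous_id) continuous_const
  obtain ⟨p, hpP, hpmin⟩ := exists_norm_eq_iInf_of_complete_convex hP
    hPclosed.isComplete hPconvex u
  have hvar : ∀ w ∈ P, ⟪u - p, w - p⟫_ℝ ≤ 0 :=
    (norm_eq_iInf_iff_real_inner_le_zero hPconvex hpP).mp hpmin
  -- active set
  set act : ι → Prop := fun i => ⟪a i, p⟫_ℝ = q i with hact
  have hfark : u - p ∈ coneSet a act := by
    apply farkas_cone
    intro w hw
    -- show p + t w ∈ P eventually for t → 0+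
    have hev : ∀ᶠ t : ℝ in nhdsWithin 0 (Set.Ioi 0), p + t • w ∈ P := by
      simp only [hPdef, Set.mem_setOf_eq]
      rw [Filter.eventually_all (ι := ι)]
      intro i
      by_cases hi : act i
      · filter_upwards [self_mem_nhdsWithin] with t ht
        have : ⟪a i, p + t • w⟫_ℝ = q i + t * ⟪a i, w⟫_ℝ := by
          rw [inner_add_right, real_inner_smul_right, hi]
        rw [this]
        nlinarith [hw i hi, Set.mem_Ioi.mp ht]
      · have hlt : ⟪a i, p⟫_ℝ < q i := lt_of_le_of_ne (hpP i) hi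
        have hcont : Filter.Tendsto (fun t : ℝ => ⟪a i, p + t • w⟫_ℝ)
            (nhdsWithin 0 (Set.Ioi 0)) (nhds ⟪a i, p + (0:ℝ) • w⟫_ℝ) := by
          apply Filter.Tendsto.mono_left ?_ nhdsWithin_le_nhds
          exact (Continuous.inner continuous_const
            (continuous_const.add ((continuous_id.smul continuous_const)))).continuousAt
        simp only [zero_smul, add_zero] at hcont
        filter_upwards [hcont.eventually_lt_const hlt] with t ht
        exact ht.le
    have hev2 := hev.and self_mem_nhdsWithin
    obtain ⟨t, htP, ht0⟩ := hev2.exists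
    have ht0' : (0:ℝ) < t := ht0
    have := hvar _ htP
    rw [add_sub_cancel_left, real_inner_smul_right] at this
    nlinarith
  obtain ⟨lam, hlam0, hlamoff, hlamsum⟩ := hfark
  obtain ⟨mu, hmu0, hmusupp, hmusum, hmuind⟩ := carath_red a lam hlam0
  have hmumass := hmass mu hmu0 hmuind
  rw [hmusum, ← hlamsum] at hmumass
  -- key computation
  have hkey : ‖u - p‖ ^ 2 ≤ (∑ i, mu i) * B := by
    have h1 : ‖u - p‖ ^ 2 = ⟪u - p, u - p⟫_ℝ := (real_inner_self_eq_norm_sq _).symm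
    have h2 : ⟪u - p, u - p⟫_ℝ = ∑ i, mu i * ⟪a i, u - p⟫_ℝ := by
      nth_rewrite 1 [hlamsum, ← hmusum]
      rw [sum_inner]
      exact Finset.sum_congr rfl fun i _ => real_inner_smul_left _ _ _
    rw [h1, h2]
    have : ∀ i ∈ univ, mu i * ⟪a i, u - p⟫_ℝ ≤ mu i * B := by
      intro i _
      by_cases hi : mu i = 0
      · simp [hi]
      · have hact_i : act i := by
          by_contra hna
          exact hi (hmusupp i (hlamoff i hna))
        have : ⟪a i, u - p⟫_ℝ = ⟪a i, u⟫_ℝ - q i := by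
          rw [inner_sub_right, hact_i]
        rw [this]
        exact mul_le_mul_of_nonneg_left (by linarith [hres i]) (hmu0 i)
    calc ∑ i, mu i * ⟪a i, u - p⟫_ℝ ≤ ∑ i, mu i * B := Finset.sum_le_sum this
    _ = (∑ i, mu i) * B := by rw [← Finset.sum_mul]
  refine ⟨p, hpP, ?_⟩
  rcases (norm_nonneg (u - p)).lt_or_eq with hn | hn
  · have h3 : ‖u - p‖ ^ 2 ≤ (H * ‖u - p‖) * B := by
      calc ‖u - p‖ ^ 2 ≤ (∑ i, mu i) * B := hkey
      _ ≤ (H * ‖u - p‖) * B := mul_le_mul_of_nonneg_right hmumass hB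
    nlinarith
  · rw [← hn]; positivity

end FD

section LPaux

open Matrix

variable {m n : ℕ}

/-- Pack a primal-dual pair into a Euclidean space. -/
def vecPD (x : Fin n → ℝ) (y : Fin m → ℝ) : EuclideanSpace ℝ (Fin n ⊕ Fin m) :=
  WithLp.toLp 2 (Sum.elim x y)

lemma vecPD_sub (x x' : Fin n → ℝ) (y y' : Fin m → ℝ) :
    vecPD (x - x') (y - y') = vecPD x y - vecPD x' y' := by
  ext i; cases i <;> rfl

lemma vecPD_smul (t : ℝ) (x : Fin n → ℝ) (y : Fin m → ℝ) :
    vecPD (t • x) (t • y) = t • vecPD x y := by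
  ext i; cases i <;> rfl

open scoped InnerProductSpace in
lemma inner_vecPD (x x' : Fin n → ℝ) (y y' : Fin m → ℝ) :
    ⟪vecPD x y, vecPD x' y'⟫_ℝ = x ⬝ᵥ x' + y ⬝ᵥ y' := by
  simp only [PiLp.inner_apply, RCLike.inner_apply, conj_trivial, Fintype.sum_sum_type]
  simp [vecPD, dotProduct, mul_comm]

lemma norm_vecPD (x : Fin n → ℝ) (y : Fin m → ℝ) :
    ‖vecPD x y‖ = enormP (x, y) := by
  rw [EuclideanSpace.norm_eq, enormP]
  congr 1
  simp only [Fintype.sum_sum_type]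
  simp [vecPD, dotProduct, sq_abs, pow_two]

lemma dotProduct_self_nonneg'' {k : ℕ} (v : Fin k → ℝ) : 0 ≤ v ⬝ᵥ v :=
  Finset.sum_nonneg fun i _ => mul_self_nonneg _

lemma enormP_sq (z : (Fin n → ℝ) × (Fin m → ℝ)) :
    enormP z ^ 2 = z.1 ⬝ᵥ z.1 + z.2 ⬝ᵥ z.2 :=
  Real.sq_sqrt (add_nonneg (dotProduct_self_nonneg'' _) (dotProduct_self_nonneg'' _))

lemma enormP_nonneg (z : (Fin n → ℝ) × (Fin m → ℝ)) : 0 ≤ enormP z := Real.sqrt_nonneg _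

lemma enormP_eq_norm (w z : (Fin n → ℝ) × (Fin m → ℝ)) :
    enormP (w - z) = ‖vecPD w.1 w.2 - vecPD z.1 z.2‖ := by
  rw [← vecPD_sub, norm_vecPD]
  rfl

lemma dotProduct_self_nonneg' (v : Fin n → ℝ) : 0 ≤ v ⬝ᵥ v :=
  Finset.sum_nonneg fun i _ => mul_self_nonneg _

lemma abs_coord_le_norm {κ : Type*} [Fintype κ] (v : EuclideanSpace ℝ κ) (i : κ) :
    |v i| ≤ ‖v‖ := by
  rw [EuclideanSpace.norm_eq]
  rw [show |v i| = Real.sqrt (‖v i‖ ^ 2) by rw [Real.sqrt_sq_eq_abs, Real.norm_eq_abs, abs_abs]]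
  apply Real.sqrt_le_sqrt
  exact Finset.single_le_sum (f := fun j => ‖v j‖ ^ 2) (fun j _ => sq_nonneg _)
    (Finset.mem_univ i)

/-- transpose/dot identity -/
lemma dot_mulVec_eq (A : Matrix (Fin m) (Fin n) ℝ) (y : Fin m → ℝ) (x : Fin n → ℝ) :
    y ⬝ᵥ A.mulVec x = Aᵀ.mulVec y ⬝ᵥ x := by
  rw [Matrix.dotProduct_mulVec, Matrix.mulVec_transpose]

/-- The fundamental bilinear representation of the duality gap. -/
lemma gap_eq (A : Matrix (Fin m) (Fin n) ℝ) (b : Fin m → ℝ) (c : Fin n → ℝ)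
    (z w : (Fin n → ℝ) × (Fin m → ℝ)) :
    lagr A b c z.1 w.2 - lagr A b c w.1 z.2 =
      (Aᵀ.mulVec z.2 - c) ⬝ᵥ (w.1 - z.1) + (b - A.mulVec z.1) ⬝ᵥ (w.2 - z.2) := by
  simp only [lagr, sub_dotProduct, dotProduct_sub]
  rw [dot_mulVec_eq A z.2 w.1, ← dot_mulVec_eq A z.2 z.1,
    dotProduct_comm (A.mulVec z.1) z.2, dotProduct_comm (A.mulVec z.1) w.2]
  ring

/-- Characterization of saddle points as KKT points. -/
lemma saddle_iff_kkt (A : Matrix (Fin m) (Fin n) ℝ) (b : Fin m → ℝ) (c : Fin n → ℝ)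
    (w : (Fin n → ℝ) × (Fin m → ℝ)) :
    isSaddle A b c w ↔ ((∀ i, 0 ≤ w.1 i) ∧ A.mulVec w.1 = b ∧
      (∀ i, Aᵀ.mulVec w.2 i ≤ c i) ∧ c ⬝ᵥ w.1 ≤ b ⬝ᵥ w.2) := by
  obtain ⟨x, y⟩ := w
  constructor
  · rintro ⟨hz, hsad⟩
    have hx0 : ∀ i, 0 ≤ x i := hz
    -- primal feasibility
    have hfeas : A.mulVec x = b := by
      set d : Fin m → ℝ := b - A.mulVec x with hd
      have h1 := (hsad (x, y + d) hz).1
      have h2 : lagr A b c x (y + d) - lagr A b c x y = d ⬝ᵥ d := by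
        have e1 : d ⬝ᵥ d = d ⬝ᵥ b - d ⬝ᵥ (A.mulVec x) := by
          nth_rewrite 2 [hd]
          rw [dotProduct_sub]
        simp only [lagr, add_dotProduct, dotProduct_add]
        rw [e1, dotProduct_comm b d]
        ring
      have h3 : d ⬝ᵥ d ≤ 0 := by linarith
      have h4 : d ⬝ᵥ d = 0 := le_antisymm h3 (dotProduct_self_nonneg' d)
      have h5 : ∀ j, d j = 0 := by
        intro j
        have := (Finset.sum_eq_zero_iff_of_nonneg
          (fun j _ => mul_self_nonneg (d j))).mp h4 j (Finset.mem_univ j)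
        exact mul_self_eq_zero.mp this
      funext j
      have := h5 j
      simp only [hd, Pi.sub_apply] at this
      linarith
    refine ⟨hx0, hfeas, ?_, ?_⟩
    · intro i
      have h1 := (hsad (x + Pi.single i 1, y) ?_).2
      · have h2 : lagr A b c (x + Pi.single i 1) y - lagr A b c x y
            = c i - Aᵀ.mulVec y i := by
          simp only [lagr, dotProduct_add, Matrix.mulVec_add, dotProduct_add]
          rw [dot_mulVec_eq A y (Pi.single i 1)]
          simp [dotProduct_single]
          ring
        linarith
      · intro j
        simp only []
        by_cases hji : j = i
        · subst hji; simp only [Pi.add_apply, Pi.single_eq_same]; linarith [hx0 j]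
        · simpa [Pi.single_apply, hji] using hx0 j
    · have h1 := (hsad (0, y) (fun i => le_refl 0)).2
      have h2 : lagr A b c 0 y = b ⬝ᵥ y := by simp [lagr]
      have h3 : lagr A b c x y = c ⬝ᵥ x := by
        simp only [lagr, hfeas]
        rw [dotProduct_comm b y]
        ring
      rw [h2, h3] at h1
      exact h1
  · rintro ⟨hx0, hfeas, hdual, hgap⟩
    refine ⟨hx0, ?_⟩
    rintro ⟨x', y'⟩ hw'
    have hlxy : lagr A b c x y = c ⬝ᵥ x := by
      simp only [lagr, hfeas]; rw [dotProduct_comm b y]; ring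
    constructor
    · have : lagr A b c x y' = c ⬝ᵥ x := by
        simp only [lagr, hfeas]; rw [dotProduct_comm b y']; ring
      rw [this, hlxy]
    · have h2 : lagr A b c x' y = (c - Aᵀ.mulVec y) ⬝ᵥ x' + b ⬝ᵥ y := by
        simp only [lagr, sub_dotProduct]
        rw [dot_mulVec_eq A y x']
      have h3 : 0 ≤ (c - Aᵀ.mulVec y) ⬝ᵥ x' :=
        Finset.sum_nonneg fun i _ => mul_nonneg (by simpa using sub_nonneg.mpr (hdual i)) (hw' i)
      rw [hlxy, h2]
      linarith

/-- Constraint index set for the saddle-point polyhedron. -/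
abbrev KKTidx (m n : ℕ) := Fin n ⊕ Fin m ⊕ Fin m ⊕ Fin n ⊕ Unit

/-- Constraint normal vectors. -/
noncomputable def rowVec (A : Matrix (Fin m) (Fin n) ℝ) (b : Fin m → ℝ) (c : Fin n → ℝ) :
    KKTidx m n → EuclideanSpace ℝ (Fin n ⊕ Fin m)
  | Sum.inl i => vecPD (-(Pi.single i 1)) 0
  | Sum.inr (Sum.inl j) => vecPD (fun i => A j i) 0
  | Sum.inr (Sum.inr (Sum.inl j)) => vecPD (fun i => -A j i) 0
  | Sum.inr (Sum.inr (Sum.inr (Sum.inl i))) => vecPD 0 (fun j => A j i)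
  | Sum.inr (Sum.inr (Sum.inr (Sum.inr _))) => vecPD c (-b)

/-- Constraint right-hand sides. -/
noncomputable def rowRhs (A : Matrix (Fin m) (Fin n) ℝ) (b : Fin m → ℝ) (c : Fin n → ℝ) :
    KKTidx m n → ℝ
  | Sum.inl _ => 0
  | Sum.inr (Sum.inl j) => b j
  | Sum.inr (Sum.inr (Sum.inl j)) => -b j
  | Sum.inr (Sum.inr (Sum.inr (Sum.inl i))) => c i
  | Sum.inr (Sum.inr (Sum.inr (Sum.inr _))) => 0

open scoped InnerProductSpace in
lemma saddle_iff_rows (A : Matrix (Fin m) (Fin n) ℝ) (b : Fin m → ℝ) (c : Fin n → ℝ)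
    (w : (Fin n → ℝ) × (Fin m → ℝ)) :
    isSaddle A b c w ↔
      ∀ i, ⟪rowVec A b c i, vecPD w.1 w.2⟫_ℝ ≤ rowRhs A b c i := by
  rw [saddle_iff_kkt]
  constructor
  · rintro ⟨hx0, hfeas, hdual, hgap⟩ i
    match i with
    | Sum.inl i =>
      simp only [rowVec]
      rw [inner_vecPD]
      simp only [rowRhs, zero_dotProduct, add_zero, neg_dotProduct]
      rw [single_dotProduct]
      simp [hx0 i]
    | Sum.inr (Sum.inl j) =>
      simp only [rowVec]
      rw [inner_vecPD]
      simp only [rowRhs, zero_dotProduct, add_zero]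
      have : (fun i => A j i) ⬝ᵥ w.1 = A.mulVec w.1 j := rfl
      rw [this, hfeas]
    | Sum.inr (Sum.inr (Sum.inl j)) =>
      simp only [rowVec]
      rw [inner_vecPD]
      simp only [rowRhs, zero_dotProduct, add_zero]
      have : (fun i => -A j i) ⬝ᵥ w.1 = -(A.mulVec w.1 j) := by
        simp [dotProduct, Matrix.mulVec, Finset.sum_neg_distrib, neg_mul]
      rw [this, hfeas]
    | Sum.inr (Sum.inr (Sum.inr (Sum.inl i))) =>
      simp only [rowVec]
      rw [inner_vecPD]
      simp only [rowRhs, zero_dotProduct, zero_add]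
      have : (fun j => A j i) ⬝ᵥ w.2 = Aᵀ.mulVec w.2 i := by
        simp [Matrix.mulVec, dotProduct, Matrix.transpose_apply]
      rw [this]
      exact hdual i
    | Sum.inr (Sum.inr (Sum.inr (Sum.inr _))) =>
      simp only [rowVec]
      rw [inner_vecPD]
      simp only [rowRhs, neg_dotProduct]
      linarith [hgap, (dotProduct_comm b w.2)]
  · intro h
    refine ⟨?_, ?_, ?_, ?_⟩
    · intro i
      have := h (Sum.inl i)
      simp only [rowVec] at this
      rw [inner_vecPD] at this
      simp only [rowRhs, zero_dotProduct, add_zero, neg_dotProduct] at this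
      rw [single_dotProduct] at this
      simpa using this
    · funext j
      have h1 := h (Sum.inr (Sum.inl j))
      have h2 := h (Sum.inr (Sum.inr (Sum.inl j)))
      simp only [rowVec] at h1 h2
      rw [inner_vecPD] at h1
      rw [inner_vecPD] at h2
      simp only [rowRhs, zero_dotProduct, add_zero] at h1 h2
      have e1 : (fun i => A j i) ⬝ᵥ w.1 = A.mulVec w.1 j := rfl
      have e2 : (fun i => -A j i) ⬝ᵥ w.1 = -(A.mulVec w.1 j) := by
        simp [dotProduct, Matrix.mulVec, neg_mul]
      rw [e1] at h1; rw [e2] at h2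
      linarith
    · intro i
      have := h (Sum.inr (Sum.inr (Sum.inr (Sum.inl i))))
      simp only [rowVec] at this
      rw [inner_vecPD] at this
      simp only [rowRhs, zero_dotProduct, zero_add] at this
      have e : (fun j => A j i) ⬝ᵥ w.2 = Aᵀ.mulVec w.2 i := by
        simp [Matrix.mulVec, dotProduct, Matrix.transpose_apply]
      rwa [e] at this
    · have := h (Sum.inr (Sum.inr (Sum.inr (Sum.inr ()))))
      simp only [rowVec] at this
      rw [inner_vecPD] at this
      simp only [rowRhs, neg_dotProduct] at this
      linarith

end LPaux

set_option maxHeartbeats 1600000 in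
/-- **Sharpness of LP** (Proposition 1): if `Z* ≠ ∅`, then for every `R > 0` there is
`α > 0` such that `α·dist₂(z, Z*) ≤ ρ_r(z)` for all `z ∈ Z` with `‖z‖₂ ≤ R` and all
`0 < r ≤ R`. -/
theorem lp_sharpness {m n : ℕ} (A : Matrix (Fin m) (Fin n) ℝ)
    (b : Fin m → ℝ) (c : Fin n → ℝ)
    (hne : ∃ zs : (Fin n → ℝ) × (Fin m → ℝ), isSaddle A b c zs)
    (R : ℝ) (hR : 0 < R) :
    ∃ α : ℝ, 0 < α ∧ ∀ z : (Fin n → ℝ) × (Fin m → ℝ), inZ z → enormP z ≤ R →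
      ∀ r : ℝ, 0 < r → r ≤ R → α * dist2 A b c z ≤ rho A b c r z := by
  classical
  open scoped InnerProductSpace in
  obtain ⟨zs, hzs⟩ := hne
  obtain ⟨H, hH, hhoff⟩ := hoffman_bound (rowVec A b c) (rowRhs A b c)
    ⟨vecPD zs.1 zs.2, (saddle_iff_rows A b c zs).mp hzs⟩
  refine ⟨(H * (2 * R + 1))⁻¹, by positivity, ?_⟩
  intro z hzZ hzR r hr hrR
  set S : Set ℝ := {g | ∃ w, inZ w ∧ enormP (w - z) ≤ r ∧
    g = lagr A b c z.1 w.2 - lagr A b c w.1 z.2} with hS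
  have hrho : rho A b c r z = (1/r) * sSup S := rfl
  set gv : EuclideanSpace ℝ (Fin n ⊕ Fin m) :=
    vecPD (Aᵀ.mulVec z.2 - c) (b - A.mulVec z.1) with hgv
  have hgap_inner : ∀ w : (Fin n → ℝ) × (Fin m → ℝ),
      lagr A b c z.1 w.2 - lagr A b c w.1 z.2
        = ⟪gv, vecPD w.1 w.2 - vecPD z.1 z.2⟫_ℝ := by
    intro w
    rw [gap_eq, hgv, ← vecPD_sub, inner_vecPD]
  have henormzz : enormP (z - z) = 0 := by
    rw [sub_self]
    show Real.sqrt _ = 0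
    rw [show ((0 : (Fin n → ℝ) × (Fin m → ℝ)).1 ⬝ᵥ (0 : (Fin n → ℝ) × (Fin m → ℝ)).1
      + (0 : (Fin n → ℝ) × (Fin m → ℝ)).2 ⬝ᵥ (0 : (Fin n → ℝ) × (Fin m → ℝ)).2) = 0 by
        simp]
    exact Real.sqrt_zero
  have h0S : (0:ℝ) ∈ S := by
    refine ⟨z, hzZ, by rw [henormzz]; exact hr.le, ?_⟩
    rw [hgap_inner z, sub_self, inner_zero_right]
  have hbdd : BddAbove S := by
    refine ⟨‖gv‖ * r, ?_⟩
    rintro g ⟨w, hw, hwr, rfl⟩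
    rw [hgap_inner w]
    calc ⟪gv, vecPD w.1 w.2 - vecPD z.1 z.2⟫_ℝ
        ≤ ‖gv‖ * ‖vecPD w.1 w.2 - vecPD z.1 z.2‖ := real_inner_le_norm _ _
    _ = ‖gv‖ * enormP (w - z) := by rw [enormP_eq_norm w z]
    _ ≤ ‖gv‖ * r := mul_le_mul_of_nonneg_left hwr (norm_nonneg _)
  set σ : ℝ := sSup S with hσ
  have hσ0 : 0 ≤ σ := le_csSup hbdd h0S
  have hρval : rho A b c r z = σ / r := by rw [hrho]; ring
  set ρ : ℝ := σ / r with hρdef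
  have hρ0 : 0 ≤ ρ := div_nonneg hσ0 hr.le
  have hσρ : σ = r * ρ := by rw [hρdef]; field_simp
  -- point bound
  have hpoint : ∀ w : (Fin n → ℝ) × (Fin m → ℝ), inZ w → enormP (w - z) ≤ R →
      r * (lagr A b c z.1 w.2 - lagr A b c w.1 z.2) ≤ R * σ := by
    intro w hw hwR
    set D : ℝ := enormP (w - z) with hD
    have hD0 : 0 ≤ D := enormP_nonneg _
    have hmaxpos : 0 < max D r := lt_of_lt_of_le hr (le_max_right _ _)
    set t : ℝ := r / max D r with htdef
    have ht0 : 0 < t := div_pos hr hmaxpos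
    have ht1 : t ≤ 1 := (div_le_one hmaxpos).mpr (le_max_right _ _)
    set w' : (Fin n → ℝ) × (Fin m → ℝ) :=
      (z.1 + t • (w.1 - z.1), z.2 + t • (w.2 - z.2)) with hw'
    have hw'Z : inZ w' := by
      intro i
      simp only [hw', Pi.add_apply, Pi.smul_apply, Pi.sub_apply, smul_eq_mul]
      nlinarith [hzZ i, hw i]
    have hw'sub : vecPD w'.1 w'.2 - vecPD z.1 z.2
        = t • (vecPD w.1 w.2 - vecPD z.1 z.2) := by
      ext j
      cases j <;>
        simp [hw', vecPD, Pi.sub_apply, Pi.smul_apply, smul_eq_mul] <;> ring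
    have hw'norm : enormP (w' - z) ≤ r := by
      rw [enormP_eq_norm, hw'sub, norm_smul, Real.norm_eq_abs, abs_of_pos ht0,
        ← enormP_eq_norm, ← hD]
      rw [htdef, div_mul_eq_mul_div, div_le_iff₀ hmaxpos]
      nlinarith [le_max_left D r]
    have hgapt : lagr A b c z.1 w'.2 - lagr A b c w'.1 z.2
        = t * (lagr A b c z.1 w.2 - lagr A b c w.1 z.2) := by
      rw [hgap_inner w', hw'sub, real_inner_smul_right, hgap_inner w]
    have hmem : t * (lagr A b c z.1 w.2 - lagr A b c w.1 z.2) ∈ S :=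
      ⟨w', hw'Z, hw'norm, hgapt.symm⟩
    have hle : t * (lagr A b c z.1 w.2 - lagr A b c w.1 z.2) ≤ σ := le_csSup hbdd hmem
    have htmax : t * max D r = r := by
      rw [htdef]; field_simp
    calc r * (lagr A b c z.1 w.2 - lagr A b c w.1 z.2)
        = (t * (lagr A b c z.1 w.2 - lagr A b c w.1 z.2)) * max D r :=
          (by rw [mul_right_comm, htmax] :
            (t * (lagr A b c z.1 w.2 - lagr A b c w.1 z.2)) * max D r
              = r * (lagr A b c z.1 w.2 - lagr A b c w.1 z.2)).symm
    _ ≤ σ * max D r := mul_le_mul_of_nonneg_right hle hmaxpos.le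
    _ ≤ σ * R := mul_le_mul_of_nonneg_left (max_le hwR hrR) hσ0
    _ = R * σ := mul_comm _ _
  -- residual norm bound
  set pg : EuclideanSpace ℝ (Fin n ⊕ Fin m) :=
    vecPD (projPos (Aᵀ.mulVec z.2 - c)) (b - A.mulVec z.1) with hpg
  have hdotproj : (Aᵀ.mulVec z.2 - c) ⬝ᵥ projPos (Aᵀ.mulVec z.2 - c)
      = projPos (Aᵀ.mulVec z.2 - c) ⬝ᵥ projPos (Aᵀ.mulVec z.2 - c) := by
    apply Finset.sum_congr rfl
    intro i _
    simp only [projPos]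
    rcases le_or_gt ((Aᵀ.mulVec z.2 - c) i) 0 with h | h
    · rw [max_eq_right h, mul_zero, zero_mul]
    · rw [max_eq_left h.le]
  have hnormpg_sq : ⟪gv, pg⟫_ℝ = ‖pg‖^2 := by
    rw [hgv, hpg, inner_vecPD, norm_vecPD, enormP_sq, hdotproj]
  have hpgle : ‖pg‖ ≤ ρ := by
    by_cases hpg0 : pg = 0
    · rw [hpg0, norm_zero]; exact hρ0
    · have hpgpos : 0 < ‖pg‖ := norm_pos_iff.mpr hpg0
      set s : ℝ := r / ‖pg‖ with hsdef
      have hs0 : 0 < s := div_pos hr hpgpos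
      set w : (Fin n → ℝ) × (Fin m → ℝ) :=
        (z.1 + s • projPos (Aᵀ.mulVec z.2 - c), z.2 + s • (b - A.mulVec z.1)) with hw
      have hwZ : inZ w := by
        intro i
        simp only [hw, Pi.add_apply, Pi.smul_apply, smul_eq_mul, projPos]
        have : 0 ≤ max ((Aᵀ.mulVec z.2 - c) i) 0 := le_max_right _ _
        nlinarith [hzZ i]
      have hwsub : vecPD w.1 w.2 - vecPD z.1 z.2 = s • pg := by
        ext j
        cases j <;>
          simp [hw, hpg, vecPD, Pi.sub_apply, Pi.smul_apply, smul_eq_mul]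
      have hwnorm : enormP (w - z) ≤ r := by
        rw [enormP_eq_norm, hwsub, norm_smul, Real.norm_eq_abs, abs_of_pos hs0, hsdef]
        rw [div_mul_cancel₀ _ (ne_of_gt hpgpos)]
      have hgapw : lagr A b c z.1 w.2 - lagr A b c w.1 z.2 = s * ‖pg‖^2 := by
        rw [hgap_inner w, hwsub, real_inner_smul_right, hnormpg_sq]
      have hmem : s * ‖pg‖^2 ∈ S := ⟨w, hwZ, hwnorm, hgapw.symm⟩
      have hle := le_csSup hbdd hmem
      have : r * ‖pg‖ ≤ σ := by
        rw [hsdef] at hle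
        calc r * ‖pg‖ = r / ‖pg‖ * ‖pg‖ ^ 2 := by field_simp
        _ ≤ σ := hle
      rw [hρdef, le_div_iff₀ hr]
      linarith [this]
  have hcoord : ∀ j, |pg j| ≤ ρ := fun j => le_trans (abs_coord_le_norm pg j) hpgle
  -- residual bounds
  set B : ℝ := (2 * R + 1) * ρ with hB
  have hB0 : 0 ≤ B := by positivity
  have hρB : ρ ≤ B := by nlinarith
  have hres : ∀ i, ⟪rowVec A b c i, vecPD z.1 z.2⟫_ℝ ≤ rowRhs A b c i + B := by
    intro i
    match i with
    | Sum.inl i =>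
      simp only [rowVec]
      rw [inner_vecPD, neg_dotProduct, single_dotProduct]
      simp only [rowRhs, zero_dotProduct, add_zero, one_mul]
      linarith [hzZ i, hB0]
    | Sum.inr (Sum.inl j) =>
      simp only [rowVec]
      rw [inner_vecPD]
      simp only [rowRhs, zero_dotProduct, add_zero]
      have e1 : (fun i => A j i) ⬝ᵥ z.1 = A.mulVec z.1 j := rfl
      have e2 : pg (Sum.inr j) = b j - A.mulVec z.1 j := rfl
      have := hcoord (Sum.inr j)
      rw [e2] at this
      rw [e1]
      have h3 := abs_le.mp this
      linarith [h3.1, h3.2, hρB]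
    | Sum.inr (Sum.inr (Sum.inl j)) =>
      simp only [rowVec]
      rw [inner_vecPD]
      simp only [rowRhs, zero_dotProduct, add_zero]
      have e1 : (fun i => -A j i) ⬝ᵥ z.1 = -(A.mulVec z.1 j) := by
        simp [dotProduct, Matrix.mulVec, neg_mul]
      have e2 : pg (Sum.inr j) = b j - A.mulVec z.1 j := rfl
      have := hcoord (Sum.inr j)
      rw [e2] at this
      rw [e1]
      have h3 := abs_le.mp this
      linarith [h3.1, h3.2, hρB]
    | Sum.inr (Sum.inr (Sum.inr (Sum.inl i))) =>
      simp only [rowVec]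
      rw [inner_vecPD]
      simp only [rowRhs, zero_dotProduct, zero_add]
      have e1 : (fun j => A j i) ⬝ᵥ z.2 = Aᵀ.mulVec z.2 i := by
        simp [Matrix.mulVec, dotProduct, Matrix.transpose_apply]
      have e2 : pg (Sum.inl i) = max ((Aᵀ.mulVec z.2 - c) i) 0 := rfl
      have h2 := hcoord (Sum.inl i)
      rw [e2] at h2
      have h3 : (Aᵀ.mulVec z.2 - c) i ≤ max ((Aᵀ.mulVec z.2 - c) i) 0 := le_max_left _ _
      have h4 : max ((Aᵀ.mulVec z.2 - c) i) 0 ≤ ρ := le_trans (le_abs_self _) h2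
      have h5 : (Aᵀ.mulVec z.2 - c) i = Aᵀ.mulVec z.2 i - c i := rfl
      rw [e1]
      rw [h5] at h3
      rw [h5] at h4
      linarith [hρB, h3, h4]
    | Sum.inr (Sum.inr (Sum.inr (Sum.inr _))) =>
      simp only [rowVec]
      rw [inner_vecPD]
      simp only [rowRhs, neg_dotProduct]
      -- c ⬝ᵥ z.1 + -(b ⬝ᵥ z.2) ≤ 0 + B
      -- Use the point (0, z.2)
      have hw0 : inZ ((0 : Fin n → ℝ), z.2) := fun i => le_refl 0
      have hwnorm : enormP (((0 : Fin n → ℝ), z.2) - z) ≤ R := by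
        have e : enormP (((0 : Fin n → ℝ), z.2) - z) = Real.sqrt (z.1 ⬝ᵥ z.1) := by
          show Real.sqrt _ = _
          congr 1
          show ((0:Fin n → ℝ) - z.1) ⬝ᵥ ((0:Fin n → ℝ) - z.1)
            + (z.2 - z.2) ⬝ᵥ (z.2 - z.2) = z.1 ⬝ᵥ z.1
          rw [zero_sub, sub_self, neg_dotProduct, dotProduct_neg, neg_neg]
          simp
        rw [e]
        refine le_trans ?_ hzR
        show Real.sqrt _ ≤ enormP z
        apply Real.sqrt_le_sqrt
        have := dotProduct_self_nonneg'' z.2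
        linarith
      have hpt := hpoint ((0 : Fin n → ℝ), z.2) hw0 hwnorm
      have hgap0 : lagr A b c z.1 ((0 : Fin n → ℝ), z.2).2
          - lagr A b c ((0 : Fin n → ℝ), z.2).1 z.2
          = c ⬝ᵥ z.1 - z.2 ⬝ᵥ A.mulVec z.1 := by
        simp only [lagr, zero_dotProduct, Matrix.mulVec_zero, dotProduct_zero]
        ring
      rw [hgap0] at hpt
      -- so (c⬝z1 − z2⬝(A z1)) ≤ R * ρ
      have h6 : c ⬝ᵥ z.1 - z.2 ⬝ᵥ A.mulVec z.1 ≤ R * ρ := by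
        rw [hσρ] at hpt
        have hrr : r * (c ⬝ᵥ z.1 - z.2 ⬝ᵥ A.mulVec z.1) ≤ r * (R * ρ) := by
          calc r * (c ⬝ᵥ z.1 - z.2 ⬝ᵥ A.mulVec z.1) ≤ R * (r * ρ) := hpt
          _ = r * (R * ρ) := by ring
        exact le_of_mul_le_mul_left hrr hr
      -- Cauchy-Schwarz for the correction term
      have h7 : |z.2 ⬝ᵥ (b - A.mulVec z.1)| ≤ R * ρ := by
        have e1 : z.2 ⬝ᵥ (b - A.mulVec z.1)
            = ⟪vecPD (0 : Fin n → ℝ) z.2, vecPD (0 : Fin n → ℝ) (b - A.mulVec z.1)⟫_ℝ := by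
          rw [inner_vecPD, zero_dotProduct, zero_add]
        have h8 : ‖vecPD (0 : Fin n → ℝ) z.2‖ ≤ R := by
          rw [norm_vecPD]
          refine le_trans ?_ hzR
          show Real.sqrt _ ≤ enormP z
          apply Real.sqrt_le_sqrt
          have := dotProduct_self_nonneg'' z.1
          simp only [zero_dotProduct]
          linarith
        have h9 : ‖vecPD (0 : Fin n → ℝ) (b - A.mulVec z.1)‖ ≤ ρ := by
          refine le_trans ?_ hpgle
          rw [norm_vecPD, hpg, norm_vecPD]
          show Real.sqrt _ ≤ Real.sqrt _
          apply Real.sqrt_le_sqrt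
          have := dotProduct_self_nonneg'' (projPos (Aᵀ.mulVec z.2 - c))
          simp only [zero_dotProduct]
          linarith
        rw [e1]
        calc |⟪vecPD (0 : Fin n → ℝ) z.2, vecPD (0 : Fin n → ℝ) (b - A.mulVec z.1)⟫_ℝ|
            ≤ ‖vecPD (0 : Fin n → ℝ) z.2‖ * ‖vecPD (0 : Fin n → ℝ) (b - A.mulVec z.1)‖ :=
              abs_real_inner_le_norm _ _
        _ ≤ R * ρ := mul_le_mul h8 h9 (norm_nonneg _) hR.le
      have h10 : z.2 ⬝ᵥ (b - A.mulVec z.1) = z.2 ⬝ᵥ b - z.2 ⬝ᵥ A.mulVec z.1 :=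
        dotProduct_sub _ _ _
      have h11 := abs_le.mp h7
      have h12 : z.2 ⬝ᵥ b = b ⬝ᵥ z.2 := dotProduct_comm _ _
      rw [h10, h12] at h11
      rw [hB]
      linarith [h11.1, h11.2, h6, hρ0]
  -- apply Hoffman
  obtain ⟨p, hpP, hpnear⟩ := hhoff (vecPD z.1 z.2) B hB0 hres
  set wp : (Fin n → ℝ) × (Fin m → ℝ) :=
    (fun i => p (Sum.inl i), fun j => p (Sum.inr j)) with hwp
  have hwpv : vecPD wp.1 wp.2 = p := by ext j; cases j <;> rfl
  have hwpsad : isSaddle A b c wp := by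
    rw [saddle_iff_rows, hwpv]
    exact hpP
  have hbddb : BddBelow {d | ∃ w, isSaddle A b c w ∧ d = enormP (z - w)} := by
    refine ⟨0, ?_⟩
    rintro d ⟨w, _, rfl⟩
    exact enormP_nonneg _
  have hdist : dist2 A b c z ≤ H * B := by
    calc dist2 A b c z ≤ enormP (z - wp) := csInf_le hbddb ⟨wp, hwpsad, rfl⟩
    _ = ‖vecPD z.1 z.2 - vecPD wp.1 wp.2‖ := enormP_eq_norm z wp
    _ = ‖vecPD z.1 z.2 - p‖ := by rw [hwpv]
    _ ≤ H * B := hpnear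
  rw [hρval]
  have hHB : H * B = (H * (2 * R + 1)) * ρ := by rw [hB]; ring
  rw [hHB] at hdist
  have hpos : (0:ℝ) < H * (2 * R + 1) := by positivity
  calc (H * (2 * R + 1))⁻¹ * dist2 A b c z
      ≤ (H * (2 * R + 1))⁻¹ * ((H * (2 * R + 1)) * ρ) := by
        apply mul_le_mul_of_nonneg_left ?_ (by positivity)
        · exact hdist
  _ = ρ := by field_simp
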